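/- arXiv:math/0701237 — 3 statements merged into one kernel-verified Lean document; each statement's English description precedes it below -/
import Mathlib

section
/- Let G be a graph with m edges, girth exactly 4, and spectral radius μ (largest eigenvalue of the adjacency matrix). Then μ² ≤ m. -/
open Finset SimpleGraph

/-- `μ` is the largest eigenvalue (spectral radius) of the adjacency matrix of `G`. -/
def IsSpectralRadius {V : Type*} [Fintype V] [DecidableEq V] (G : SimpleGraph V)
    [DecidableRel G.Adj] (μ : ℝ) : Prop :=
  Module.End.HasEigenvalue (Matrix.toLin' (G.adjMatrix ℝ)) μ ∧
    ∀ x : ℝ, Module.End.HasEigenvalue (Matrix.toLin' (G.adjMatrix ℝ)) x → x ≤ μ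

private lemma triangle_free_of_girth_four {V : Type*} (G : SimpleGraph V)
    (hg : G.girth = 4) {a b c : V} (hab : G.Adj a b) (hbc : G.Adj b c)
    (hac : G.Adj a c) : False := by
  have hE : G.egirth ≠ ⊤ := by
    intro h
    rw [SimpleGraph.girth, h] at hg
    simp at hg
  have hE4 : G.egirth = 4 := by
    rw [SimpleGraph.girth] at hg
    exact (ENat.toNat_eq_iff (by norm_num)).mp hg
  have h4 : (4 : ℕ∞) ≤ G.egirth := le_of_eq hE4.symm
  rw [SimpleGraph.le_egirth] at h4
  -- build the triangle cycle a-b-c-a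
  let w : G.Walk a a := .cons hab (.cons hbc (.cons hac.symm .nil))
  have hcyc : w.IsCycle := by
    have h1 : a ≠ b := hab.ne
    have h2 : b ≠ c := hbc.ne
    have h3 : a ≠ c := hac.ne
    simp [w, SimpleGraph.Walk.isCycle_def, SimpleGraph.Walk.isTrail_def,
      Sym2.eq_iff, h1, h2, h3, h1.symm, h2.symm, h3.symm]
  have := h4 a w hcyc
  simp [w] at this
  norm_num at this

private lemma sum_deg_le {V : Type*} [Fintype V] [DecidableEq V] (G : SimpleGraph V)
    [DecidableRel G.Adj] (hg : G.girth = 4) (u : V) :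
    ∑ w ∈ G.neighborFinset u, G.degree w ≤ G.edgeFinset.card := by
  have hdeg : ∀ w : V, G.degree w = ∑ e ∈ G.edgeFinset, (if w ∈ e then 1 else 0) := by
    intro w
    rw [← SimpleGraph.card_incidenceFinset_eq_degree, SimpleGraph.incidenceFinset_eq_filter,
      Finset.card_filter]
  calc ∑ w ∈ G.neighborFinset u, G.degree w
      = ∑ w ∈ G.neighborFinset u, ∑ e ∈ G.edgeFinset, (if w ∈ e then 1 else 0) := by
        simp_rw [hdeg]
    _ = ∑ e ∈ G.edgeFinset, ∑ w ∈ G.neighborFinset u, (if w ∈ e then 1 else 0) :=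
        Finset.sum_comm
    _ ≤ ∑ _e ∈ G.edgeFinset, 1 := by
        apply Finset.sum_le_sum
        intro e he
        rw [← Finset.card_filter]
        apply Finset.card_le_one.mpr
        intro w1 h1 w2 h2
        simp only [Finset.mem_filter, SimpleGraph.mem_neighborFinset] at h1 h2
        by_contra hne
        have hee : e = s(w1, w2) := (Sym2.mem_and_mem_iff hne).mp ⟨h1.2, h2.2⟩
        have : G.Adj w1 w2 := by
          rw [← SimpleGraph.mem_edgeSet, ← hee]
          exact (SimpleGraph.mem_edgeFinset).mp he
        exact triangle_free_of_girth_four G hg h1.1 this h2.1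
    _ = G.edgeFinset.card := by simp

theorem stmt0 {V : Type*} [Fintype V] [DecidableEq V] (G : SimpleGraph V)
    [DecidableRel G.Adj] (μ : ℝ) (hμ : IsSpectralRadius G μ)
    (hg : G.girth = 4) :
    μ ^ 2 ≤ (G.edgeFinset.card : ℝ) := by
  obtain ⟨x, hx⟩ := hμ.1.exists_hasEigenvector
  have hx0 : x ≠ 0 := hx.right
  have hAx : (G.adjMatrix ℝ).mulVec x = μ • x := by
    have := hx.apply_eq_smul
    rwa [Matrix.toLin'_apply] at this
  -- pick a coordinate of maximal absolute value
  have hVne : Nonempty V := by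
    by_contra h
    exact hx0 (funext fun v => absurd ⟨v⟩ h)
  obtain ⟨u, -, hu⟩ := Finset.exists_max_image (Finset.univ : Finset V)
    (fun v => |x v|) Finset.univ_nonempty
  have hu' : ∀ v : V, |x v| ≤ |x u| := fun v => hu v (Finset.mem_univ v)
  have hxu : 0 < |x u| := by
    rcases Function.ne_iff.mp hx0 with ⟨v, hv⟩
    exact lt_of_lt_of_le (abs_pos.mpr hv) (hu' v)
  -- A² x = μ² x
  have hA2 : (G.adjMatrix ℝ).mulVec ((G.adjMatrix ℝ).mulVec x) = (μ ^ 2) • x := by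
    rw [hAx, Matrix.mulVec_smul, hAx, smul_smul, sq]
  have hcoord : (μ ^ 2) * x u
      = ∑ w ∈ G.neighborFinset u, ∑ v ∈ G.neighborFinset w, x v := by
    have := congrFun hA2 u
    simp only [Pi.smul_apply, smul_eq_mul] at this
    rw [← this, SimpleGraph.adjMatrix_mulVec_apply]
    exact Finset.sum_congr rfl fun w _ => by rw [SimpleGraph.adjMatrix_mulVec_apply]
  have hbound : (μ ^ 2) * |x u| ≤ (G.edgeFinset.card : ℝ) * |x u| := by
    have h1 : (μ ^ 2) * |x u| = |(μ ^ 2) * x u| := by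
      rw [abs_mul, abs_of_nonneg (sq_nonneg μ)]
    rw [h1, hcoord]
    calc |∑ w ∈ G.neighborFinset u, ∑ v ∈ G.neighborFinset w, x v|
        ≤ ∑ w ∈ G.neighborFinset u, ∑ v ∈ G.neighborFinset w, |x v| := by
          refine (Finset.abs_sum_le_sum_abs _ _).trans ?_
          exact Finset.sum_le_sum fun w _ => Finset.abs_sum_le_sum_abs _ _
      _ ≤ ∑ w ∈ G.neighborFinset u, ∑ _v ∈ G.neighborFinset w, |x u| :=
          Finset.sum_le_sum fun w _ => Finset.sum_le_sum fun v _ => hu' v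
      _ = (∑ w ∈ G.neighborFinset u, (G.degree w : ℝ)) * |x u| := by
          simp [SimpleGraph.card_neighborFinset_eq_degree, Finset.sum_mul]
      _ ≤ (G.edgeFinset.card : ℝ) * |x u| := by
          apply mul_le_mul_of_nonneg_right _ (abs_nonneg _)
          have := sum_deg_le G hg u
          calc (∑ w ∈ G.neighborFinset u, (G.degree w : ℝ))
              = ((∑ w ∈ G.neighborFinset u, G.degree w : ℕ) : ℝ) := by push_cast; ring
            _ ≤ (G.edgeFinset.card : ℝ) := by exact_mod_cast this
  exact le_of_mul_le_mul_right hbound hxu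
end

section
/- Let G be a triangle-free graph (girth at least 4, or no cycles at all) with m edges and spectral radius μ. Then μ² ≤ m. -/
/-!
`μ²` is an eigenvalue of `A²`, a nonnegative matrix, so by Gershgorin it is at most some row sum
of `A²`. The `u`-th row sum of `A²` is `∑_{v ~ u} deg v`, and in a triangle-free graph the
neighbours of `u` are pairwise non-adjacent, so the edges at different neighbours are distinct
and this sum is at most `m`.
-/

open Finset

theorem Matrix.exists_eigenvalue_le_sum_row {n : Type*} [Fintype n] [DecidableEq n]
    {B : Matrix n n ℝ} (hB : ∀ i j, 0 ≤ B i j) {c : ℝ}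
    (hc : Module.End.HasEigenvalue (Matrix.toLin' B) c) : ∃ k, c ≤ ∑ j, B k j := by
  obtain ⟨k, hk⟩ := eigenvalue_mem_ball hc
  refine ⟨k, ?_⟩
  rw [Metric.mem_closedBall, Real.dist_eq] at hk
  simp only [Real.norm_eq_abs, abs_of_nonneg (hB k _)] at hk
  rw [← add_sum_erase _ _ (mem_univ k)]
  linarith [le_abs_self (c - B k k)]

namespace SimpleGraph

variable {V : Type*} [Fintype V] [DecidableEq V] (G : SimpleGraph V) [DecidableRel G.Adj]

theorem sum_degree_le_card_edgeFinset_of_isIndepSet {s : Finset V} (hs : G.IsIndepSet s) :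
    ∑ v ∈ s, G.degree v ≤ #G.edgeFinset := by
  have hdisj : (s : Set V).PairwiseDisjoint (fun v ↦ G.incidenceFinset v) := by
    intro v hv w hw hvw
    rw [Function.onFun, ← disjoint_coe, coe_incidenceFinset, coe_incidenceFinset,
      Set.disjoint_iff_inter_eq_empty]
    exact G.incidenceSet_inter_incidenceSet_of_not_adj (hs hv hw hvw) hvw
  calc ∑ v ∈ s, G.degree v = #(s.biUnion fun v ↦ G.incidenceFinset v) := by
        simp_rw [card_biUnion hdisj, card_incidenceFinset_eq_degree]
    _ ≤ #G.edgeFinset := card_le_card (biUnion_subset.2 fun v _ ↦ G.incidenceFinset_subset v)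

theorem sum_degree_neighborFinset_le_card_edgeFinset (h : G.CliqueFree 3) (u : V) :
    ∑ v ∈ G.neighborFinset u, G.degree v ≤ #G.edgeFinset :=
  G.sum_degree_le_card_edgeFinset_of_isIndepSet <| by
    simpa using isIndepSet_neighborSet_of_triangleFree G h u

theorem sum_adjMatrix_sq_apply {R : Type*} [Semiring R] (u : V) :
    ∑ w, (G.adjMatrix R ^ 2) u w = ∑ v ∈ G.neighborFinset u, (G.degree v : R) := by
  simp only [sq, adjMatrix_mul_apply]
  rw [sum_comm]
  refine sum_congr rfl fun v _ ↦ ?_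
  simp [← card_neighborFinset_eq_degree, neighborFinset_eq_filter]

end SimpleGraph

theorem stmt1 {V : Type*} [Fintype V] [DecidableEq V] (G : SimpleGraph V)
    [DecidableRel G.Adj] (μ : ℝ) (hμ : IsSpectralRadius G μ)
    (htf : G.CliqueFree 3) :
    μ ^ 2 ≤ (G.edgeFinset.card : ℝ) := by
  have hsq : Module.End.HasEigenvalue (Matrix.toLin' (G.adjMatrix ℝ ^ 2)) (μ ^ 2) := by
    rw [Matrix.toLin'_pow]
    exact hμ.1.pow 2
  have hnonneg : ∀ i j, 0 ≤ (G.adjMatrix ℝ ^ 2) i j := by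
    intro i j
    rw [SimpleGraph.adjMatrix_pow_apply_eq_card_walk]
    positivity
  obtain ⟨u, hu⟩ := Matrix.exists_eigenvalue_le_sum_row hnonneg hsq
  calc μ ^ 2 ≤ ∑ w, (G.adjMatrix ℝ ^ 2) u w := hu
    _ = ∑ v ∈ G.neighborFinset u, (G.degree v : ℝ) := G.sum_adjMatrix_sq_apply u
    _ ≤ G.edgeFinset.card := by
      exact_mod_cast G.sum_degree_neighborFinset_le_card_edgeFinset htf u
end

section
/- Let G be a graph on n vertices with girth at least 5 and spectral radius μ satisfying μ² = n − 1. Then G is either a star K_{1,n−1} or a Moore graph of diameter 2 (a d-regular graph on n = d² + 1 vertices with girth 5). -/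
open Finset Matrix

theorem Function.exists_pos_forall_le {V : Type*} [Finite V] {x : V → ℝ} (hx : 0 ≤ x)
    (hx0 : x ≠ 0) : ∃ u, 0 < x u ∧ ∀ v, x v ≤ x u := by
  obtain ⟨v, hv⟩ := Function.ne_iff.mp hx0
  have : Nonempty V := ⟨v⟩
  obtain ⟨u, hu⟩ := Finite.exists_max x
  exact ⟨u, ((hx v).lt_of_ne' hv).trans_le (hu v), hu⟩

theorem Matrix.exists_nonneg_abs_smul_le_mulVec {V : Type*} [Fintype V] [DecidableEq V]
    {A : Matrix V V ℝ} (hA : ∀ i j, 0 ≤ A i j) {μ : ℝ}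
    (hμ : Module.End.HasEigenvalue (Matrix.toLin' A) μ) :
    ∃ x : V → ℝ, 0 ≤ x ∧ x ≠ 0 ∧ |μ| • x ≤ A *ᵥ x := by
  obtain ⟨y, hy⟩ := hμ.exists_hasEigenvector
  have hyA : A *ᵥ y = μ • y := by simpa using hy.apply_eq_smul
  refine ⟨|y|, abs_nonneg y, by simpa using hy.2, fun i => ?_⟩
  calc |μ| * |y i| = |(A *ᵥ y) i| := by simp [hyA, abs_mul]
    _ ≤ ∑ j, |A i j * y j| := abs_sum_le_sum_abs _ _
    _ = (A *ᵥ |y|) i := by simp [mulVec, dotProduct, abs_mul, abs_of_nonneg (hA i _)]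

namespace SimpleGraph

variable {V : Type*} {G : SimpleGraph V}

theorem not_adj_of_five_le_girth (hg : 5 ≤ G.girth) {a b c : V} (hab : G.Adj a b)
    (hbc : G.Adj b c) : ¬G.Adj c a := fun hca => by
  have hc : (Walk.cons hab (.cons hbc (.cons hca .nil))).IsCycle := by
    simp [Walk.isCycle_def, hab.ne, hbc.ne, hca.ne, hab.ne', hca.ne', Sym2.eq, Sym2.rel_iff']
  simpa using hg.trans (girth_le_length hc)

theorem eq_of_adj_of_five_le_girth (hg : 5 ≤ G.girth) {a b c d : V} (hac : a ≠ c)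
    (hab : G.Adj a b) (hbc : G.Adj b c) (had : G.Adj a d) (hdc : G.Adj d c) : b = d := by
  by_contra hbd
  have hc : (Walk.cons hab (.cons hbc (.cons hdc.symm (.cons had.symm .nil)))).IsCycle := by
    simp [Walk.isCycle_def, hab.ne, hbc.ne, had.ne, hab.ne', hdc.ne', had.ne', hac, hbd,
      hac.symm, Sym2.eq, Sym2.rel_iff']
  simpa using hg.trans (girth_le_length hc)

theorem girth_le_five {a b c d e : V} (hab : G.Adj a b) (hbc : G.Adj b c) (hcd : G.Adj c d)
    (hde : G.Adj d e) (hea : G.Adj e a) (hac : a ≠ c) (had : a ≠ d) (hbd : b ≠ d) (hbe : b ≠ e)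
    (hce : c ≠ e) : G.girth ≤ 5 := by
  have hc : (Walk.cons hab (.cons hbc (.cons hcd (.cons hde (.cons hea .nil))))).IsCycle := by
    simp [Walk.isCycle_def, hab.ne, hbc.ne, hcd.ne, hde.ne, hea.ne, hab.ne', hea.ne', hac, hbd,
      hac.symm, had, had.symm, hbe, hce, Sym2.eq, Sym2.rel_iff']
  simpa using girth_le_length hc

theorem girth_le_card [Fintype V] : G.girth ≤ Fintype.card V := by
  by_cases h : G.IsAcyclic
  · simp [h.girth_eq_zero]
  obtain ⟨a, w, hw, hlen⟩ := exists_girth_eq_length.mpr h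
  simpa [hlen] using hw.support_nodup.length_le_card

theorem adj_iff_of_forall_adj (hg : 5 ≤ G.girth) {c : V} (hc : ∀ v, v ≠ c → G.Adj c v)
    (u v : V) : G.Adj u v ↔ (u = c ∧ v ≠ c) ∨ (v = c ∧ u ≠ c) := by
  constructor
  · intro h
    by_cases hu : u = c
    · exact Or.inl ⟨hu, hu ▸ h.ne'⟩
    by_cases hv : v = c
    · exact Or.inr ⟨hv, hu⟩
    exact (not_adj_of_five_le_girth hg (hc u hu) h (hc v hv).symm).elim
  · rintro (⟨rfl, hv⟩ | ⟨rfl, hu⟩)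
    exacts [hc v hv, (hc u hu).symm]

theorem forall_adj_of_notMem (hg : 5 ≤ G.girth) {S : Set V}
    (hS : ∀ s ∈ S, ∀ p, p ≠ s → ¬G.Adj s p → p ∈ S) {u v w : V} (hu : u ∈ S) (hv : v ∈ S)
    (huv : u ≠ v) (hw : w ∉ S) (p : V) (hpw : p ≠ w) : G.Adj w p := by
  have hadj : ∀ s ∈ S, ∀ q ∉ S, G.Adj s q := fun s hs q hq => by
    by_contra hsq
    exact hq (hS s hs q (fun h => hq (h ▸ hs)) hsq)
  by_cases hp : p ∈ S
  · exact (hadj p hp w hw).symm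
  · exact absurd (eq_of_adj_of_five_le_girth hg huv (hadj u hu w hw) (hadj v hv w hw).symm
      (hadj u hu p hp) (hadj v hv p hp).symm) hpw.symm

theorem adjMatrix_nonneg [DecidableRel G.Adj] (v w : V) : 0 ≤ G.adjMatrix ℝ v w := by
  rw [adjMatrix_apply]
  split_ifs <;> norm_num

section Finite

variable [Fintype V] [DecidableRel G.Adj]

theorem exists_adj_ne_of_two_le_degree {v : V} (hv : 2 ≤ G.degree v) (w : V) :
    ∃ w', G.Adj v w' ∧ w' ≠ w := by
  obtain ⟨w', hw', hne⟩ :=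
    (G.neighborFinset v).exists_mem_ne (by rw [card_neighborFinset_eq_degree]; omega) w
  exact ⟨w', (mem_neighborFinset ..).mp hw', hne⟩

theorem girth_eq_five [Nonempty V] (hg : 5 ≤ G.girth) (hdeg : ∀ v, 2 ≤ G.degree v)
    (hcommon : ∀ v w, v ≠ w → ¬G.Adj v w → ∃ u, G.Adj v u ∧ G.Adj u w) : G.girth = 5 := by
  obtain ⟨u⟩ := ‹Nonempty V›
  obtain ⟨a, hua⟩ := (G.degree_pos_iff_exists_adj u).mp (zero_lt_two.trans_le (hdeg u))
  obtain ⟨b, hub, hba⟩ := exists_adj_ne_of_two_le_degree (hdeg u) a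
  obtain ⟨a', haa', ha'u⟩ := exists_adj_ne_of_two_le_degree (hdeg a) u
  have hua' : ¬G.Adj u a' := fun h => not_adj_of_five_le_girth hg hua haa' h.symm
  have ha'b : a' ≠ b := fun h => hua' (h ▸ hub)
  have hba' : ¬G.Adj a' b := fun h =>
    hba (eq_of_adj_of_five_le_girth hg ha'u.symm hua haa' hub h.symm).symm
  obtain ⟨w, ha'w, hwb⟩ := hcommon a' b ha'b hba'
  have huw : u ≠ w := fun h => hua' (h ▸ ha'w.symm)
  have haw : a ≠ w := fun h => not_adj_of_five_le_girth hg hub.symm hua (h ▸ hwb)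
  exact le_antisymm (girth_le_five hua haa' ha'w hwb hub.symm ha'u.symm huw haw hba.symm ha'b) hg

theorem exists_isRegularOfDegree_of_degree_eq [Nonempty V] (hg : 5 ≤ G.girth) {r : ℝ}
    (hr2 : r ^ 2 = Fintype.card V - 1) (hdeg : ∀ v, (G.degree v : ℝ) = r)
    (hcommon : ∀ v w, v ≠ w → ¬G.Adj v w → ∃ u, G.Adj v u ∧ G.Adj u w) :
    ∃ d : ℕ, G.IsRegularOfDegree d ∧ G.girth = 5 ∧ Fintype.card V = d ^ 2 + 1 := by
  obtain ⟨u⟩ := ‹Nonempty V›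
  have hreg : G.IsRegularOfDegree (G.degree u) := fun v => by
    exact_mod_cast (hdeg v).trans (hdeg u).symm
  have hcard : Fintype.card V = G.degree u ^ 2 + 1 := by
    have : (Fintype.card V : ℝ) = (G.degree u : ℝ) ^ 2 + 1 := by rw [hdeg u, hr2]; ring
    exact_mod_cast this
  have hdeg2 : 2 ≤ G.degree u := by
    have := hg.trans G.girth_le_card
    nlinarith
  exact ⟨G.degree u, hreg, girth_eq_five hg (fun v => hreg v ▸ hdeg2) hcommon, hcard⟩

theorem adjMatrix_mul_self_apply {α : Type*} [NonAssocSemiring α] (v w : V) :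
    (G.adjMatrix α * G.adjMatrix α) v w = #{u ∈ G.neighborFinset v | G.Adj u w} := by
  simp only [adjMatrix_mul_apply, adjMatrix_apply, sum_boole]

theorem adjMatrix_mul_self_apply_add_adjMatrix_apply_le_one (hg : 5 ≤ G.girth) {v w : V}
    (hvw : v ≠ w) : (G.adjMatrix ℝ * G.adjMatrix ℝ) v w + G.adjMatrix ℝ v w ≤ 1 := by
  rw [adjMatrix_mul_self_apply, adjMatrix_apply]
  split_ifs with hadj
  · have hcommon : #{u ∈ G.neighborFinset v | G.Adj u w} = 0 :=
      card_eq_zero.mpr <| filter_eq_empty_iff.mpr fun u hu huw =>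
        not_adj_of_five_le_girth hg ((mem_neighborFinset ..).mp hu) huw hadj.symm
    simp [hcommon]
  · have hcommon : #{u ∈ G.neighborFinset v | G.Adj u w} ≤ 1 :=
      card_le_one.mpr fun a ha b hb => by
        simp only [mem_filter, mem_neighborFinset] at ha hb
        exact eq_of_adj_of_five_le_girth hg hvw ha.1 ha.2 hb.1 hb.2
    simpa using hcommon

variable [DecidableEq V]

theorem sum_erase_one_sub_adjMatrix_apply (m : V) :
    ∑ v ∈ univ.erase m, (1 - G.adjMatrix ℝ m v) = Fintype.card V - 1 - G.degree m := by
  have hrow : ∑ v, G.adjMatrix ℝ m v = G.degree m := by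
    simp [adjMatrix_apply, sum_boole, ← card_neighborFinset_eq_degree, neighborFinset_eq_filter]
  rw [sum_sub_distrib, sum_const, card_erase_of_mem (mem_univ m), card_univ, ← hrow,
    ← add_sum_erase _ _ (mem_univ m)]
  simp [Nat.cast_sub (Fintype.card_pos_iff.mpr ⟨m⟩)]

theorem adjMatrix_mul_self_mulVec_apply (x : V → ℝ) (m : V) :
    ((G.adjMatrix ℝ * G.adjMatrix ℝ) *ᵥ x) m =
      G.degree m * x m + ∑ v ∈ univ.erase m, (G.adjMatrix ℝ * G.adjMatrix ℝ) m v * x v := by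
  rw [mulVec, dotProduct, ← add_sum_erase _ _ (mem_univ m), adjMatrix_mul_self_apply_self]

theorem adjMatrix_mul_self_apply_mul_le (hg : 5 ≤ G.girth) {x : V → ℝ} {M : ℝ} (hx : 0 ≤ x)
    (hxM : ∀ v, x v ≤ M) {m v : V} (hv : v ∈ univ.erase m) :
    (G.adjMatrix ℝ * G.adjMatrix ℝ) m v * x v ≤ (1 - G.adjMatrix ℝ m v) * M := by
  have hle := adjMatrix_mul_self_apply_add_adjMatrix_apply_le_one hg (ne_of_mem_erase hv).symm
  have hnonneg : 0 ≤ (G.adjMatrix ℝ * G.adjMatrix ℝ) m v := by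
    rw [adjMatrix_mul_self_apply]; positivity
  calc (G.adjMatrix ℝ * G.adjMatrix ℝ) m v * x v
      ≤ (G.adjMatrix ℝ * G.adjMatrix ℝ) m v * M := mul_le_mul_of_nonneg_left (hxM v) hnonneg
    _ ≤ (1 - G.adjMatrix ℝ m v) * M :=
      mul_le_mul_of_nonneg_right (by linarith) ((hx v).trans (hxM v))

theorem adjMatrix_mul_self_mulVec_apply_le (hg : 5 ≤ G.girth) {x : V → ℝ} {M : ℝ} (hx : 0 ≤ x)
    (hxM : ∀ v, x v ≤ M) (m : V) :
    ((G.adjMatrix ℝ * G.adjMatrix ℝ) *ᵥ x) m ≤ (Fintype.card V - 1) * M := by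
  have hsum := sum_le_sum fun v hv => adjMatrix_mul_self_apply_mul_le hg hx hxM (m := m) hv
  rw [← sum_mul, sum_erase_one_sub_adjMatrix_apply] at hsum
  rw [adjMatrix_mul_self_mulVec_apply]
  nlinarith [hxM m, (G.degree m).cast_nonneg (α := ℝ)]

theorem eq_and_exists_adj_adj_of_le_adjMatrix_mul_self_mulVec_apply (hg : 5 ≤ G.girth)
    {x : V → ℝ} {M : ℝ} (hx : 0 ≤ x) (hxM : ∀ v, x v ≤ M) (hM : 0 < M) {m : V}
    (hm : (Fintype.card V - 1) * M ≤ ((G.adjMatrix ℝ * G.adjMatrix ℝ) *ᵥ x) m) {v : V}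
    (hvm : v ≠ m) (hmv : ¬G.Adj m v) : x v = M ∧ ∃ w, G.Adj m w ∧ G.Adj w v := by
  have hsum : ∑ v ∈ univ.erase m, (1 - G.adjMatrix ℝ m v) * M ≤
      ∑ v ∈ univ.erase m, (G.adjMatrix ℝ * G.adjMatrix ℝ) m v * x v := by
    rw [← sum_mul, sum_erase_one_sub_adjMatrix_apply]
    rw [adjMatrix_mul_self_mulVec_apply] at hm
    nlinarith [hxM m, (G.degree m).cast_nonneg (α := ℝ)]
  have heq := (sum_eq_sum_iff_of_le fun v hv => adjMatrix_mul_self_apply_mul_le hg hx hxM hv).mp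
    (le_antisymm (sum_le_sum fun v hv => adjMatrix_mul_self_apply_mul_le hg hx hxM hv) hsum)
    v (mem_erase.mpr ⟨hvm, mem_univ v⟩)
  have hAmv : G.adjMatrix ℝ m v = 0 := by simp [adjMatrix_apply, hmv]
  have hle := adjMatrix_mul_self_apply_add_adjMatrix_apply_le_one hg hvm.symm
  rw [hAmv, sub_zero, one_mul] at heq
  rw [hAmv, add_zero] at hle
  refine ⟨le_antisymm (hxM v) (by nlinarith [mul_nonneg (sub_nonneg.mpr hle) (hx v)]), ?_⟩
  have hcommon : #{u ∈ G.neighborFinset m | G.Adj u v} ≠ 0 := by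
    intro h
    rw [adjMatrix_mul_self_apply, h] at heq
    simp [hM.ne] at heq
  obtain ⟨w, hw⟩ := card_ne_zero.mp hcommon
  rw [mem_filter, mem_neighborFinset] at hw
  exact ⟨w, hw⟩

theorem mul_eq_adjMatrix_mulVec_apply_of_forall_le (hg : 5 ≤ G.girth) {x : V → ℝ} (hx : 0 ≤ x)
    {r : ℝ} (hr : 0 < r) (hr2 : r ^ 2 = Fintype.card V - 1) (hrx : r • x ≤ G.adjMatrix ℝ *ᵥ x)
    {m : V} (hm : ∀ v, x v ≤ x m) :
    r * x m = (G.adjMatrix ℝ *ᵥ x) m ∧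
      (Fintype.card V - 1) * x m ≤ ((G.adjMatrix ℝ * G.adjMatrix ℝ) *ᵥ x) m := by
  have h1 : r * (r * x m) ≤ r * (G.adjMatrix ℝ *ᵥ x) m :=
    mul_le_mul_of_nonneg_left (hrx m) hr.le
  have h2 : r * (G.adjMatrix ℝ *ᵥ x) m ≤ ((G.adjMatrix ℝ * G.adjMatrix ℝ) *ᵥ x) m := by
    rw [← mulVec_mulVec, adjMatrix_mulVec_apply, adjMatrix_mulVec_apply, mul_sum]
    exact sum_le_sum fun w _ => hrx w
  have h3 := adjMatrix_mul_self_mulVec_apply_le hg hx hm m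
  have hsq : r * (r * x m) = (Fintype.card V - 1) * x m := by rw [← hr2]; ring
  exact ⟨mul_left_cancel₀ hr.ne' (by linarith), by linarith⟩

theorem mul_eq_adjMatrix_mulVec_apply_and_forall_not_adj_of_forall_le (hg : 5 ≤ G.girth)
    {x : V → ℝ} (hx : 0 ≤ x) {r : ℝ} (hr : 0 < r) (hr2 : r ^ 2 = Fintype.card V - 1)
    (hrx : r • x ≤ G.adjMatrix ℝ *ᵥ x) {m : V} (hm : ∀ v, x v ≤ x m) (hxm : 0 < x m) :
    r * x m = (G.adjMatrix ℝ *ᵥ x) m ∧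
      ∀ v, v ≠ m → ¬G.Adj m v → x v = x m ∧ ∃ w, G.Adj m w ∧ G.Adj w v := by
  obtain ⟨heig, hsq⟩ := mul_eq_adjMatrix_mulVec_apply_of_forall_le hg hx hr hr2 hrx hm
  exact ⟨heig, fun v =>
    eq_and_exists_adj_adj_of_le_adjMatrix_mul_self_mulVec_apply hg hx hm hxm hsq⟩

end Finite

end SimpleGraph

theorem stmt4 {V : Type*} [Fintype V] [DecidableEq V] (G : SimpleGraph V)
    [DecidableRel G.Adj] (μ : ℝ) (hμ : IsSpectralRadius G μ)
    (hg : 5 ≤ G.girth) (heq : μ ^ 2 = (Fintype.card V : ℝ) - 1) :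
    (∃ c : V, ∀ u v : V, G.Adj u v ↔ ((u = c ∧ v ≠ c) ∨ (v = c ∧ u ≠ c))) ∨
      (∃ d : ℕ, G.IsRegularOfDegree d ∧ G.girth = 5 ∧
        Fintype.card V = d ^ 2 + 1) := by
  have hcard : (5 : ℝ) ≤ Fintype.card V := by exact_mod_cast hg.trans G.girth_le_card
  have hr2 : |μ| ^ 2 = Fintype.card V - 1 := by rw [sq_abs, heq]
  have hr : 0 < |μ| := by nlinarith [abs_nonneg μ]
  obtain ⟨x, hx, hx0, hrx⟩ := exists_nonneg_abs_smul_le_mulVec G.adjMatrix_nonneg hμ.1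
  obtain ⟨u, hxu, hu⟩ := Function.exists_pos_forall_le hx hx0
  have hmax (m : V) (hm : x m = x u) :=
    G.mul_eq_adjMatrix_mulVec_apply_and_forall_not_adj_of_forall_le hg hx hr hr2 hrx (hm ▸ hu)
      (hm ▸ hxu)
  by_cases hdom : ∀ v, v ≠ u → G.Adj u v
  · exact Or.inl ⟨u, G.adj_iff_of_forall_adj hg hdom⟩
  push Not at hdom
  obtain ⟨v₀, hv₀u, hv₀⟩ := hdom
  by_cases hconst : ∀ v, x v = x u
  · have hdeg (m : V) : (G.degree m : ℝ) = |μ| := by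
      have h := (hmax m (hconst m)).1
      rw [show x = Function.const V (x u) from funext hconst,
        SimpleGraph.adjMatrix_mulVec_const_apply] at h
      exact (mul_right_cancel₀ hxu.ne' h).symm
    have : Nonempty V := ⟨u⟩
    exact Or.inr (G.exists_isRegularOfDegree_of_degree_eq hg hr2 hdeg
      fun v w hvw hvw' => ((hmax v (hconst v)).2 w hvw.symm hvw').2)
  · push Not at hconst
    obtain ⟨w, hw⟩ := hconst
    have hS : ∀ s ∈ {v | x v = x u}, ∀ p, p ≠ s → ¬G.Adj s p → x p = x u :=
      fun s hs p hps hsp => ((hmax s hs).2 p hps hsp).1.trans hs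
    exact Or.inl ⟨w, G.adj_iff_of_forall_adj hg (G.forall_adj_of_notMem hg hS
      rfl ((hmax u rfl).2 v₀ hv₀u hv₀).1 hv₀u.symm hw)⟩
end
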